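/- Let G be a 3-connected finite simple graph and (Y₀,S₀,Z₀) a proper non-degenerate separation of G of order 3 such that G[Z₀] is connected and (Y₀,S₀,Z₀) has no split vertex. Then 𝒯(Y₀,S₀,Z₀) := {(Y,S,Z) : (Y,S,Z) is a separation of G of order < 4 such that Z₀ ⊆ Z or |Z ∩ S₀| > |Y ∩ S₀|} is a G-tangle of order 4. -/

import Mathlib

variable {V : Type*} {W : Type*}

/-- A separation (Y,S,Z) of a graph: pairwise disjoint sets covering the vertex set,
with no edge between Y and Z. -/
def IsSeparation (G : SimpleGraph V) (Y S Z : Set V) : Prop :=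
  Disjoint Y S ∧ Disjoint Y Z ∧ Disjoint S Z ∧ Y ∪ S ∪ Z = Set.univ ∧
    ∀ y ∈ Y, ∀ z ∈ Z, ¬ G.Adj y z

/-- `G` is `k`-connected: more than `k` vertices and no proper separation of order `< k`. -/
def KConnected (k : ℕ) (G : SimpleGraph V) : Prop :=
  k < Nat.card V ∧
    ∀ Y S Z : Set V, IsSeparation G Y S Z → Y.Nonempty → Z.Nonempty → k ≤ S.ncard

/-- `G` is quasi-4-connected. -/
def Quasi4Connected (G : SimpleGraph V) : Prop :=
  KConnected 3 G ∧
    ∀ Y S Z : Set V, IsSeparation G Y S Z → S.ncard = 3 → Y.ncard ≤ 1 ∨ Z.ncard ≤ 1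

/-- `T` is a `G`-tangle of order `k`. -/
def IsTangle (G : SimpleGraph V) (k : ℕ) (T : Set (Set V × Set V × Set V)) : Prop :=
  (∀ p ∈ T, IsSeparation G p.1 p.2.1 p.2.2 ∧ p.2.1.ncard < k) ∧
  (∀ Y S Z : Set V, IsSeparation G Y S Z → S.ncard < k →
    (Y, S, Z) ∈ T ∨ (Z, S, Y) ∈ T) ∧
  (∀ p₁ ∈ T, ∀ p₂ ∈ T, ∀ p₃ ∈ T,
    (p₁.2.2 ∩ p₂.2.2 ∩ p₃.2.2 : Set V).Nonempty ∨
      ∃ u v : V, G.Adj u v ∧ (u ∈ p₁.2.2 ∨ v ∈ p₁.2.2) ∧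
        (u ∈ p₂.2.2 ∨ v ∈ p₂.2.2) ∧ (u ∈ p₃.2.2 ∨ v ∈ p₃.2.2)) ∧
  (∀ p ∈ T, (p.2.2 : Set V).Nonempty)

/-- The order `⪯` on separations: (Y,S,Z) ⪯ (Y',S',Z') iff S ∪ Z ⊊ S' ∪ Z', or
S ∪ Z = S' ∪ Z' and S ⊆ S'. -/
def SepLE (p q : Set V × Set V × Set V) : Prop :=
  p.2.1 ∪ p.2.2 ⊂ q.2.1 ∪ q.2.2 ∨
    (p.2.1 ∪ p.2.2 = q.2.1 ∪ q.2.2 ∧ p.2.1 ⊆ q.2.1)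

/-- `p` is a `⪯`-minimal element of `T`. -/
def IsMinimalIn (T : Set (Set V × Set V × Set V)) (p : Set V × Set V × Set V) : Prop :=
  p ∈ T ∧ ∀ q ∈ T, SepLE q p → q = p

/-- Two separations are orthogonal. (They cross if they are not orthogonal.) -/
def SepOrthogonal (p q : Set V × Set V × Set V) : Prop :=
  (p.1 ∪ p.2.1) ∩ (q.1 ∪ q.2.1) ⊆ p.2.1 ∩ q.2.1

/-- A separation (Y,S,Z) is degenerate: |Y| = 1 and S is an independent set. -/
def Degenerate (G : SimpleGraph V) (Y S Z : Set V) : Prop :=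
  Y.ncard = 1 ∧ ∀ u ∈ S, ∀ v ∈ S, ¬ G.Adj u v

/-- The neighbourhood N(X): vertices outside X adjacent to a vertex of X. -/
def Nbhd (G : SimpleGraph V) (X : Set V) : Set V :=
  {v | v ∉ X ∧ ∃ u ∈ X, G.Adj u v}

/-- `C` is (the vertex set of) a connected component of `G − X`. -/
def IsCompOutside (G : SimpleGraph V) (X C : Set V) : Prop :=
  C ⊆ Xᶜ ∧ (G.induce C).Connected ∧ ∀ u ∈ C, ∀ v : V, v ∉ X → G.Adj u v → v ∈ C

/-- The torso `G⟦X⟧` of `X` in `G`. -/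
def torso (G : SimpleGraph V) (X : Set V) : SimpleGraph X where
  Adj u v := u ≠ v ∧ (G.Adj (u : V) (v : V) ∨
    ∃ C : Set V, IsCompOutside G X C ∧ (u : V) ∈ Nbhd G C ∧ (v : V) ∈ Nbhd G C)
  symm := by
    constructor
    rintro u v ⟨hne, h | ⟨C, hC, hu, hv⟩⟩
    · exact ⟨hne.symm, Or.inl h.symm⟩
    · exact ⟨hne.symm, Or.inr ⟨C, hC, hv, hu⟩⟩
  loopless := by
    constructor
    intro u h
    exact h.1 rfl

/-- `H` is a minor of `G`. -/
def IsMinor (H : SimpleGraph W) (G : SimpleGraph V) : Prop :=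
  ∃ M : W → Set V,
    (∀ w : W, (G.induce (M w)).Connected) ∧
    (Pairwise fun w w' : W => Disjoint (M w) (M w')) ∧
    ∀ w w' : W, H.Adj w w' → ∃ u ∈ M w, ∃ v ∈ M w', G.Adj u v

/-- `M` is a faithful model of the graph `H` (with vertex set `X ⊆ V(G)`) in `G`. -/
def FaithfulModel (G : SimpleGraph V) (X : Set V) (H : SimpleGraph X)
    (M : X → Set V) : Prop :=
  (∀ w : X, (w : V) ∈ M w) ∧
  (∀ w : X, (G.induce (M w)).Connected) ∧
  (Pairwise fun w w' : X => Disjoint (M w) (M w')) ∧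
  ∀ w w' : X, H.Adj w w' → ∃ u ∈ M w, ∃ v ∈ M w', G.Adj u v

/-- `H` (a graph with vertex set `X ⊆ V(G)`) is a faithful minor of `G`. -/
def IsFaithfulMinor (G : SimpleGraph V) (X : Set V) (H : SimpleGraph X) : Prop :=
  ∃ M : X → Set V, FaithfulModel G X H M

/-- The projection of a separation of `G` to a minor with model `M`. -/
def projSep {X : Set V} (M : X → Set V) (p : Set V × Set V × Set V) :
    Set X × Set X × Set X :=
  ({w : X | M w ⊆ p.1}, {w : X | (M w ∩ p.2.1).Nonempty}, {w : X | M w ⊆ p.2.2})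

/-- The graph TH₊₃: vertices 0,1,2,3 are v₁,v₂,v₃,v₄ (pairwise adjacent); 4,5,6 are
w₁,w₂,w₃ with w₁ ~ v₁,v₂,v₃, w₂ ~ v₁,v₂,v₄, w₃ ~ v₁,v₃,v₄. -/
def TH3 : SimpleGraph (Fin 7) :=
  SimpleGraph.fromRel (fun u v =>
    (u.val < 4 ∧ v.val < 4) ∨
    (u.val = 4 ∧ (v.val = 0 ∨ v.val = 1 ∨ v.val = 2)) ∨
    (u.val = 5 ∧ (v.val = 0 ∨ v.val = 1 ∨ v.val = 3)) ∨
    (u.val = 6 ∧ (v.val = 0 ∨ v.val = 2 ∨ v.val = 3)))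

/-- The graph TR₊₃: vertices 0,1,2 are v₁,v₂,v₃ (pairwise adjacent); 3,4,5 are
w₁,w₂,w₃, each adjacent to each of v₁,v₂,v₃. -/
def TR3 : SimpleGraph (Fin 6) :=
  SimpleGraph.fromRel (fun u v =>
    (u.val < 3 ∧ v.val < 3) ∨ (3 ≤ u.val ∧ v.val < 3))

/-- A graph is exceptional if it embeds (injectively, preserving adjacency)
into TH₊₃ or into TR₊₃. -/
def Exceptional (H : SimpleGraph W) : Prop :=
  (∃ f : W → Fin 7, Function.Injective f ∧ ∀ u v : W, H.Adj u v → TH3.Adj (f u) (f v)) ∨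
  (∃ f : W → Fin 6, Function.Injective f ∧ ∀ u v : W, H.Adj u v → TR3.Adj (f u) (f v))

/-- `X` is a `k`-inseparable set of `G`. -/
def KInseparable (G : SimpleGraph V) (k : ℕ) (X : Set V) : Prop :=
  k < X.ncard ∧
    ¬ ∃ Y S Z : Set V, IsSeparation G Y S Z ∧ S.ncard ≤ k ∧
      (X ∩ Y).Nonempty ∧ (X ∩ Z).Nonempty

/-- A triconnected region: a maximal 2-inseparable set of size ≥ 4. -/
def TriconnectedRegion (G : SimpleGraph V) (R : Set V) : Prop :=
  KInseparable G 2 R ∧ 4 ≤ R.ncard ∧ ∀ R' : Set V, R ⊂ R' → ¬ KInseparable G 2 R'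

/-- `H` is a topological subgraph of `G`. -/
def IsTopologicalSubgraph (H : SimpleGraph W) (G : SimpleGraph V) : Prop :=
  ∃ (φ : W → V) (P : ∀ u v : W, H.Adj u v → G.Walk (φ u) (φ v)),
    Function.Injective φ ∧
    (∀ u v (h : H.Adj u v), (P u v h).IsPath) ∧
    (∀ u v (h : H.Adj u v), P u v h = (P v u h.symm).reverse) ∧
    (∀ u v (h : H.Adj u v), ∀ x ∈ (P u v h).support,
      x ∈ Set.range φ → x = φ u ∨ x = φ v) ∧
    (∀ u v (h : H.Adj u v), ∀ u' v' (h' : H.Adj u' v'), s(u, v) ≠ s(u', v') →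
      ∀ x ∈ (P u v h).support, x ∈ (P u' v' h').support →
        (x = φ u ∨ x = φ v) ∧ (x = φ u' ∨ x = φ v'))

/-- A quasi-4-connected region of a 3-connected graph. -/
def Quasi4Region (G : SimpleGraph V) (R : Set V) : Prop :=
  IsFaithfulMinor G R (torso G R) ∧ Quasi4Connected (torso G R) ∧
    ∀ C : Set V, IsCompOutside G R C → (Nbhd G C).ncard = 3

/-- A split vertex of a separation (Y₀,S₀,Z₀). -/
def SplitVertex (G : SimpleGraph V) (S₀ Z₀ : Set V) (z : V) : Prop :=
  z ∈ Z₀ ∧ ∀ C : Set V, IsCompOutside G (S₀ ∪ {z}) C → (Nbhd G C).ncard = 3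

/-- The graph obtained from `G` by contracting the edge `s₁s₂` onto `s₁`. -/
def contractEdge (G : SimpleGraph V) (s₁ s₂ : V) : SimpleGraph ({s₂}ᶜ : Set V) where
  Adj u v := u ≠ v ∧ (G.Adj (u : V) (v : V) ∨
    ((u : V) = s₁ ∧ G.Adj (v : V) s₂) ∨ ((v : V) = s₁ ∧ G.Adj (u : V) s₂))
  symm := by
    constructor
    rintro u v ⟨hne, h | h | h⟩
    · exact ⟨hne.symm, Or.inl h.symm⟩
    · exact ⟨hne.symm, Or.inr (Or.inr h)⟩
    · exact ⟨hne.symm, Or.inr (Or.inl h)⟩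
  loopless := by
    constructor
    intro u h
    exact h.1 rfl

/-- `s t` are the endvertices of a crossedge of two crossing non-degenerate minimal
separations of the tangle `T`, with `s ∈ S₁` and `t ∈ S₂`. -/
def IsNondegCrossedge (G : SimpleGraph V) (T : Set (Set V × Set V × Set V))
    (s t : V) : Prop :=
  ∃ p q : Set V × Set V × Set V,
    IsMinimalIn T p ∧ IsMinimalIn T q ∧
    ¬ Degenerate G p.1 p.2.1 p.2.2 ∧ ¬ Degenerate G q.1 q.2.1 q.2.2 ∧
    ¬ SepOrthogonal p q ∧ G.Adj s t ∧ p.2.1 ∩ q.1 = {s} ∧ q.2.1 ∩ p.1 = {t}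

/-!
Since `G` has no split vertex, every `z ∈ Z₀` has a component of `G - (S₀ ∪ {z})` inside `Z₀` whose
neighbourhood is all of `S₀ ∪ {z}`, and by 3-connectivity every component of `G[Y₀]` has
neighbourhood `S₀`. These connected sets attached to all of `S₀` drive every counting argument.

For (T1), a separation oriented neither way splits `S₀` evenly and meets `Z₀`, and the attached
sets force a fourth vertex into its separator. For (T2), the big side `Z` of a member contains
`Z₀`, or contains one of the attached sets, or else `Y₀` is connected and `Z` misses at most one
vertex of `Y₀` and one of `S₀`. In every combination some edge meets all three big sides: a side
containing an attached set dominates `S₀`, so no vertex of `S₀` lies in both other sides, and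
separators of order at most three cannot absorb all the vertices this forces into them. When all
three sides are of the last kind, non-degeneracy supplies an edge inside `Y₀`, or inside `S₀` if
`|Y₀| = 1`, and such an edge meets all three.
-/

section Connectivity

variable {G : SimpleGraph V}

theorem subset_of_induce_preconnected {D A : Set V} (hD : (G.induce D).Preconnected)
    (hA : ∀ u ∈ D, ∀ v ∈ D, G.Adj u v → u ∈ A → v ∈ A) {x : V} (hxD : x ∈ D) (hxA : x ∈ A) :
    D ⊆ A := by
  intro v hv
  by_contra hvA
  obtain ⟨p⟩ := hD ⟨x, hxD⟩ ⟨v, hv⟩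
  obtain ⟨d, -, hd₁, hd₂⟩ := p.exists_boundary_dart {w | (w : V) ∈ A} hxA hvA
  exact hd₂ (hA _ d.fst.2 _ d.snd.2 d.adj hd₁)

theorem exists_adj_of_induce_preconnected {D : Set V} (hD : (G.induce D).Preconnected)
    {x y : V} (hx : x ∈ D) (hy : y ∈ D) (hxy : x ≠ y) : ∃ u ∈ D, ∃ v ∈ D, G.Adj u v := by
  by_contra! h
  exact hxy (subset_of_induce_preconnected hD (fun u hu v hv huv => (h u hu v hv huv).elim)
    hx rfl hy)

theorem exists_isCompOutside (G : SimpleGraph V) {X : Set V} {v : V} (hv : v ∉ X) :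
    ∃ C, IsCompOutside G X C ∧ v ∈ C := by
  classical
  refine ⟨{u | ∃ p : G.Walk v u, ∀ x ∈ p.support, x ∉ X}, ⟨?_, ?_, ?_⟩, ⟨.nil, by simpa⟩⟩
  · rintro u ⟨p, hp⟩
    exact hp u p.end_mem_support
  · refine G.induce_connected_of_patches v ⟨.nil, by simpa⟩ fun {w} ⟨p, hp⟩ => ?_
    refine ⟨{x | x ∈ p.support}, fun x hx => ?_, p.start_mem_support, p.end_mem_support,
      p.connected_induce_support.preconnected _ _⟩
    exact ⟨p.takeUntil x hx, fun y hy => hp y (p.support_takeUntil_subset_support hx hy)⟩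
  · rintro u ⟨p, hp⟩ w hw huw
    refine ⟨p.concat huw, fun x hx => ?_⟩
    simp only [SimpleGraph.Walk.support_concat, List.mem_append, List.mem_singleton] at hx
    rcases hx with hx | rfl
    exacts [hp x hx, hw]

theorem isSeparation_nbhd (G : SimpleGraph V) (C : Set V) :
    IsSeparation G (C ∪ Nbhd G C)ᶜ (Nbhd G C) C := by
  refine ⟨?_, ?_, ?_, ?_, ?_⟩
  · exact Set.disjoint_left.mpr fun x hx hN => hx (Or.inr hN)
  · exact Set.disjoint_left.mpr fun x hx hC => hx (Or.inl hC)
  · exact Set.disjoint_left.mpr fun x hN hC => hN.1 hC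
  · ext x
    simp only [Set.mem_union, Set.mem_compl_iff, Set.mem_univ, iff_true]
    tauto
  · intro y hy z hz hyz
    exact hy (Or.inr ⟨fun hyC => hy (Or.inl hyC), z, hz, hyz.symm⟩)

namespace IsCompOutside

variable {X C : Set V}

theorem nonempty (hC : IsCompOutside G X C) : C.Nonempty :=
  let ⟨x⟩ := hC.2.1.nonempty
  ⟨x, x.2⟩

theorem disjoint (hC : IsCompOutside G X C) : Disjoint C X :=
  Set.subset_compl_iff_disjoint_right.mp hC.1

theorem nbhd_subset (hC : IsCompOutside G X C) : Nbhd G C ⊆ X := by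
  rintro x ⟨hxC, u, hu, hux⟩
  by_contra hxX
  exact hxC (hC.2.2 u hu x hxX hux)

theorem subset_of_preconnected (hC : IsCompOutside G X C) {D : Set V}
    (hD : (G.induce D).Preconnected) (hDX : Disjoint D X) {x : V} (hxD : x ∈ D) (hxC : x ∈ C) :
    D ⊆ C :=
  subset_of_induce_preconnected hD
    (fun u _ v hv huv hu => hC.2.2 u hu v (Set.disjoint_left.mp hDX hv) huv) hxD hxC

theorem eq_of_mem {C' : Set V} (hC : IsCompOutside G X C) (hC' : IsCompOutside G X C')
    {x : V} (hx : x ∈ C) (hx' : x ∈ C') : C = C' :=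
  (hC'.subset_of_preconnected hC.2.1.preconnected hC.disjoint hx hx').antisymm
    (hC.subset_of_preconnected hC'.2.1.preconnected hC'.disjoint hx' hx)

end IsCompOutside

end Connectivity

section Separation

variable {G : SimpleGraph V} {Y S Z A D : Set V}

namespace IsSeparation

theorem symm (hs : IsSeparation G Y S Z) : IsSeparation G Z S Y := by
  obtain ⟨hYS, hYZ, hSZ, hcover, hedge⟩ := hs
  refine ⟨hSZ.symm, hYZ.symm, hYS.symm, ?_, fun z hz y hy hzy => hedge y hy z hz hzy.symm⟩
  rw [← hcover]
  ext x
  simp only [Set.mem_union]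
  tauto

theorem mem_left (hs : IsSeparation G Y S Z) {v : V} (hvS : v ∉ S) (hvZ : v ∉ Z) : v ∈ Y := by
  have hv : v ∈ Y ∪ S ∪ Z := hs.2.2.2.1 ▸ Set.mem_univ v
  rcases hv with (hvY | hvS') | hvZ'
  exacts [hvY, (hvS hvS').elim, (hvZ hvZ').elim]

theorem subset_or_subset_of_preconnected (hs : IsSeparation G Y S Z)
    (hD : (G.induce D).Preconnected) (hDS : Disjoint D S) : D ⊆ Y ∨ D ⊆ Z := by
  obtain rfl | ⟨x, hx⟩ := D.eq_empty_or_nonempty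
  · exact Or.inl (Set.empty_subset Y)
  have closed : ∀ {Y' Z'}, IsSeparation G Y' S Z' →
      ∀ u ∈ D, ∀ v ∈ D, G.Adj u v → u ∈ Y' → v ∈ Y' := fun hs' u _ v hv huv hu =>
    hs'.mem_left (Set.disjoint_left.mp hDS hv) fun hvZ => hs'.2.2.2.2 u hu v hvZ huv
  by_cases hxY : x ∈ Y
  · exact Or.inl (subset_of_induce_preconnected hD (closed hs) hx hxY)
  · exact Or.inr (subset_of_induce_preconnected hD (closed hs.symm) hx
      (hs.symm.mem_left (Set.disjoint_left.mp hDS hx) hxY))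

theorem subset_right_of_adj (hs : IsSeparation G Y S Z) (hD : (G.induce D).Preconnected)
    (hDS : Disjoint D S) {d z : V} (hd : d ∈ D) (hz : z ∈ Z) (hdz : G.Adj d z) : D ⊆ Z :=
  (hs.subset_or_subset_of_preconnected hD hDS).resolve_left
    fun hDY => hs.2.2.2.2 d (hDY hd) z hz hdz

theorem ncard_inter_add [Finite V] (hs : IsSeparation G Y S Z) (A : Set V) :
    (Y ∩ A).ncard + (S ∩ A).ncard + (Z ∩ A).ncard = A.ncard := by
  obtain ⟨hYS, hYZ, hSZ, hcover, -⟩ := hs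
  have hA : A = Y ∩ A ∪ S ∩ A ∪ Z ∩ A := by
    rw [← Set.union_inter_distrib_right, ← Set.union_inter_distrib_right, hcover, Set.univ_inter]
  conv_rhs => rw [hA]
  rw [Set.ncard_union_eq, Set.ncard_union_eq]
  · exact hYS.mono Set.inter_subset_left Set.inter_subset_left
  · exact Set.disjoint_union_left.mpr ⟨hYZ.mono Set.inter_subset_left Set.inter_subset_left,
      hSZ.mono Set.inter_subset_left Set.inter_subset_left⟩

end IsSeparation

namespace KConnected

variable {k : ℕ}

theorem le_ncard_nbhd (hk : KConnected k G) {X C : Set V} (hC : IsCompOutside G X C) {v : V}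
    (hvC : v ∉ C) (hvN : v ∉ Nbhd G C) : k ≤ (Nbhd G C).ncard :=
  hk.2 _ _ _ (isSeparation_nbhd G C) ⟨v, by simp [hvC, hvN]⟩ hC.nonempty

theorem exists_adj_of_mem [Finite V] (hk : KConnected k G) (hs : IsSeparation G Y S Z)
    (hY : Y.Nonempty) (hZ : Z.Nonempty) (hS : S.ncard ≤ k) {a : V} (ha : a ∈ S) :
    ∃ z ∈ Z, G.Adj a z := by
  by_contra! hno
  obtain ⟨hYS, hYZ, hSZ, hcover, hedge⟩ := hs
  have hs' : IsSeparation G (insert a Y) (S \ {a}) Z := by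
    refine ⟨?_, ?_, hSZ.mono_left Set.sdiff_subset, ?_, ?_⟩
    · exact Set.disjoint_insert_left.mpr ⟨by simp, hYS.mono_right Set.sdiff_subset⟩
    · exact Set.disjoint_insert_left.mpr ⟨Set.disjoint_left.mp hSZ ha, hYZ⟩
    · rw [← hcover]
      ext x
      by_cases hxa : x = a
      · subst hxa
        simp [ha]
      · simp [hxa]
    · rintro y (rfl | hy) z hz
      exacts [hno z hz, hedge y hy z hz]
  have := hk.2 _ _ _ hs' (hY.mono (Set.subset_insert a Y)) hZ
  rw [Set.ncard_sdiff_singleton_of_mem ha] at this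
  have := (Set.ncard_pos).mpr ⟨a, ha⟩
  omega

end KConnected

def Dominates (G : SimpleGraph V) (A Z : Set V) : Prop :=
  ∀ a ∈ A, ∃ z ∈ Z, G.Adj a z

theorem Dominates.mono (h : Dominates G A D) (hDZ : D ⊆ Z) : Dominates G A Z :=
  fun a ha => let ⟨d, hd, had⟩ := h a ha; ⟨d, hDZ hd, had⟩

theorem IsSeparation.mem_of_dominates (hs : IsSeparation G Y S Z) (h : Dominates G A Z)
    {a : V} (ha : a ∈ A) (haZ : a ∉ Z) : a ∈ S := by
  by_contra haS
  obtain ⟨z, hz, haz⟩ := h a ha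
  exact hs.2.2.2.2 a (hs.mem_left haS haZ) z hz haz

def IsAttached (G : SimpleGraph V) (A D : Set V) : Prop :=
  (G.induce D).Preconnected ∧ A ⊆ Nbhd G D

namespace IsAttached

theorem dominates (hD : IsAttached G A D) : Dominates G A D :=
  fun _ ha => (hD.2 ha).2.imp fun _ ⟨hd, hda⟩ => ⟨hd, hda.symm⟩

theorem disjoint (hD : IsAttached G A D) : Disjoint D A :=
  Set.disjoint_right.mpr fun _ ha => (hD.2 ha).1

end IsAttached

theorem IsSeparation.subset_of_isAttached (hs : IsSeparation G Y S Z) (hD : IsAttached G A D)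
    (hDS : Disjoint D S) {a : V} (ha : a ∈ A) (haZ : a ∈ Z) : D ⊆ Z := by
  obtain ⟨-, d, hd, hda⟩ := hD.2 ha
  exact hs.subset_right_of_adj hD.1 hDS hd haZ hda

theorem IsSeparation.inter_nonempty_of_isAttached (hs : IsSeparation G Y S Z)
    (hD : IsAttached G A D) {p q : V} (hp : p ∈ A) (hpY : p ∈ Y) (hq : q ∈ A) (hqZ : q ∈ Z) :
    (D ∩ S).Nonempty := by
  refine Set.not_disjoint_iff_nonempty_inter.mp fun hDS => ?_
  obtain ⟨d, hd, hpd⟩ := hD.dominates p hp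
  exact hs.2.2.2.2 p hpY d (hs.subset_of_isAttached hD hDS hq hqZ hd) hpd

def IsFullComp (G : SimpleGraph V) (X C : Set V) : Prop :=
  IsCompOutside G X C ∧ Nbhd G C = X

theorem IsFullComp.isAttached {X : Set V} (hC : IsFullComp G X D) (hAX : A ⊆ X) :
    IsAttached G A D :=
  ⟨hC.1.2.1.preconnected, hC.2 ▸ hAX⟩

/-- `E` may hold one vertex so that both kinds of component used below fit: components of
`G - (S₀ ∪ {z})` with `z ∈ Z₀`, and components of `G[Y₀]` (with `E = ∅`). -/
def ContainsFullComp (G : SimpleGraph V) (A Z : Set V) : Prop :=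
  ∃ E D : Set V, E.Subsingleton ∧ IsFullComp G (A ∪ E) D ∧ D ⊆ Z

theorem ContainsFullComp.dominates (h : ContainsFullComp G A Z) : Dominates G A Z :=
  let ⟨_, _, _, hD, hDZ⟩ := h
  (hD.isAttached Set.subset_union_left).dominates.mono hDZ

end Separation

section Card

variable {α : Type*} [Finite α] {A B C : Set α}

theorem inter_nonempty_of_ncard_lt_add (hA : A ⊆ C) (hB : B ⊆ C)
    (h : C.ncard < A.ncard + B.ncard) : (A ∩ B).Nonempty := by
  have := Set.ncard_inter_add_ncard_union A B
  have := Set.ncard_le_ncard (Set.union_subset hA hB)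
  exact (Set.ncard_pos).mp (by omega)

theorem mem_or_mem_of_ncard_sdiff_le_one (h : (A \ B).ncard ≤ 1) {u v : α} (hu : u ∈ A)
    (hv : v ∈ A) (huv : u ≠ v) : u ∈ B ∨ v ∈ B := by
  by_contra! huvB
  exact huv ((Set.ncard_le_one_iff).mp h ⟨hu, huvB.1⟩ ⟨hv, huvB.2⟩)

theorem one_lt_ncard_inter (hA : 3 ≤ A.ncard) (h : (A \ B).ncard ≤ 1) : 1 < (A ∩ B).ncard := by
  have := Set.ncard_inter_add_ncard_sdiff_eq_ncard A B
  omega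

theorem ncard_sdiff_le_one (hB : B.ncard ≤ 3) {a b : α} (ha : a ∈ B ∩ A) (hb : b ∈ B ∩ A)
    (hab : a ≠ b) : (B \ A).ncard ≤ 1 := by
  have := (Set.one_lt_ncard_iff).mpr ⟨a, b, ha, hb, hab⟩
  have := Set.ncard_inter_add_ncard_sdiff_eq_ncard B A
  omega

theorem inter_nonempty_of_ncard_sdiff_le_one {D D' : Set α} (h : (B \ A).ncard ≤ 1)
    (hD : Disjoint D A) (hD' : Disjoint D' A) (hDB : (D ∩ B).Nonempty) (hD'B : (D' ∩ B).Nonempty) :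
    (D ∩ D').Nonempty := by
  obtain ⟨x, hxD, hxB⟩ := hDB
  obtain ⟨y, hyD', hyB⟩ := hD'B
  obtain rfl : x = y := (Set.ncard_le_one_iff).mp h ⟨hxB, Set.disjoint_left.mp hD hxD⟩
    ⟨hyB, Set.disjoint_left.mp hD' hyD'⟩
  exact ⟨x, hxD, hyD'⟩

end Card

section EdgeMeets

variable {G : SimpleGraph V} {A Z₁ Z₂ Z₃ : Set V}

def EdgeMeets (G : SimpleGraph V) (Z₁ Z₂ Z₃ : Set V) : Prop :=
  ∃ u v : V, G.Adj u v ∧ (u ∈ Z₁ ∨ v ∈ Z₁) ∧ (u ∈ Z₂ ∨ v ∈ Z₂) ∧ (u ∈ Z₃ ∨ v ∈ Z₃)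

theorem EdgeMeets.swap (h : EdgeMeets G Z₁ Z₂ Z₃) : EdgeMeets G Z₂ Z₁ Z₃ :=
  let ⟨u, v, huv, h₁, h₂, h₃⟩ := h
  ⟨u, v, huv, h₂, h₁, h₃⟩

theorem EdgeMeets.rotate (h : EdgeMeets G Z₁ Z₂ Z₃) : EdgeMeets G Z₂ Z₃ Z₁ :=
  let ⟨u, v, huv, h₁, h₂, h₃⟩ := h
  ⟨u, v, huv, h₂, h₃, h₁⟩

theorem Dominates.edgeMeets (hd : Dominates G A Z₁) {a : V} (ha : a ∈ A) (h₂ : a ∈ Z₂)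
    (h₃ : a ∈ Z₃) : EdgeMeets G Z₁ Z₂ Z₃ :=
  let ⟨z, hz, haz⟩ := hd a ha
  ⟨a, z, haz, .inr hz, .inl h₂, .inl h₃⟩

theorem Dominates.edgeMeets_of_ncard_sdiff [Finite V] (hd : Dominates G A Z₁) (hA : 3 ≤ A.ncard)
    (h₂ : (A \ Z₂).ncard ≤ 1) (h₃ : (A \ Z₃).ncard ≤ 1) : EdgeMeets G Z₁ Z₂ Z₃ := by
  have := Set.ncard_inter_add_ncard_sdiff_eq_ncard A Z₂
  have := Set.ncard_inter_add_ncard_sdiff_eq_ncard A Z₃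
  obtain ⟨a, ⟨ha, ha₂⟩, -, ha₃⟩ := inter_nonempty_of_ncard_lt_add (A := A ∩ Z₂) (B := A ∩ Z₃)
    Set.inter_subset_left Set.inter_subset_left (by omega)
  exact hd.edgeMeets ha ha₂ ha₃

theorem edgeMeets_of_not_degenerate [Finite V] {Y₀ S₀ Z₀ : Set V}
    (hnd : ¬ Degenerate G Y₀ S₀ Z₀) (hY : Y₀.Nonempty) (hY₀ : (G.induce Y₀).Preconnected)
    (hY₁ : (Y₀ \ Z₁).ncard ≤ 1) (hY₂ : (Y₀ \ Z₂).ncard ≤ 1) (hY₃ : (Y₀ \ Z₃).ncard ≤ 1)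
    (hS₁ : (S₀ \ Z₁).ncard ≤ 1) (hS₂ : (S₀ \ Z₂).ncard ≤ 1) (hS₃ : (S₀ \ Z₃).ncard ≤ 1) :
    EdgeMeets G Z₁ Z₂ Z₃ := by
  have key : ∀ A : Set V, (A \ Z₁).ncard ≤ 1 → (A \ Z₂).ncard ≤ 1 → (A \ Z₃).ncard ≤ 1 →
      ∀ u ∈ A, ∀ v ∈ A, G.Adj u v → EdgeMeets G Z₁ Z₂ Z₃ :=
    fun A h₁ h₂ h₃ u hu v hv huv => ⟨u, v, huv,
      mem_or_mem_of_ncard_sdiff_le_one h₁ hu hv huv.ne,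
      mem_or_mem_of_ncard_sdiff_le_one h₂ hu hv huv.ne,
      mem_or_mem_of_ncard_sdiff_le_one h₃ hu hv huv.ne⟩
  by_cases hY₀' : Y₀.Nontrivial
  · obtain ⟨x, hx, y, hy, hxy⟩ := hY₀'
    obtain ⟨u, hu, v, hv, huv⟩ := exists_adj_of_induce_preconnected hY₀ hx hy hxy
    exact key Y₀ hY₁ hY₂ hY₃ u hu v hv huv
  · obtain ⟨y, hy⟩ := hY
    have h1 : Y₀.ncard = 1 :=
      Set.ncard_eq_one.mpr ⟨y, (Set.not_nontrivial_iff.mp hY₀').eq_singleton_of_mem hy⟩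
    simp only [Degenerate, h1, true_and, not_forall, not_not] at hnd
    obtain ⟨u, hu, v, hv, huv⟩ := hnd
    exact key S₀ hS₁ hS₂ hS₃ u hu v hv huv

theorem IsSeparation.inter_nonempty_of_not_edgeMeets {D Y S : Set V}
    (hs : IsSeparation G Y S Z₁) (hD : IsAttached G A D) (hDZ : D ⊆ Z₂) {x y : V} (hx : x ∈ A)
    (hx₁ : x ∈ Z₁) (hy : y ∈ A) (hy₃ : y ∈ Z₃) (hno : ¬ EdgeMeets G Z₁ Z₂ Z₃) :
    (D ∩ S).Nonempty := by
  refine Set.not_disjoint_iff_nonempty_inter.mp fun hDS => hno ?_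
  obtain ⟨d, hd, hyd⟩ := hD.dominates y hy
  exact ⟨y, d, hyd, .inr (hs.subset_of_isAttached hD hDS hx hx₁ hd), .inr (hDZ hd), .inl hy₃⟩

/-- An attached set meeting `D₂` but missing `E` would lie inside the component `D₂`, hence in `Z₂`
too; so `D₁` and `D₃` both contain the vertex of `E`, which has a neighbour in `D₂`. -/
theorem edgeMeets_of_inter_nonempty {D₁ D₂ D₃ E : Set V} (hD₁ : IsAttached G A D₁)
    (hD₁Z : D₁ ⊆ Z₁) (hD₂ : IsFullComp G (A ∪ E) D₂) (hE : E.Subsingleton) (hD₂Z : D₂ ⊆ Z₂)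
    (hD₃ : IsAttached G A D₃) (hD₃Z : D₃ ⊆ Z₃) {x₁ x₃ : V} (hx₁ : x₁ ∈ A) (hx₁' : x₁ ∈ Z₁)
    (hx₃ : x₃ ∈ A) (hx₃' : x₃ ∈ Z₃) (h₁₂ : (D₁ ∩ D₂).Nonempty) (h₃₂ : (D₃ ∩ D₂).Nonempty) :
    EdgeMeets G Z₁ Z₂ Z₃ := by
  by_contra hno
  have sub : ∀ {D : Set V}, IsAttached G A D → (D ∩ D₂).Nonempty → Disjoint D E → D ⊆ D₂ :=
    fun hD ⟨_, hd, hd₂⟩ hDE => hD₂.1.subset_of_preconnected hD.1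
      (Set.disjoint_union_right.mpr ⟨hD.disjoint, hDE⟩) hd hd₂
  obtain ⟨e, he₁, heE⟩ : (D₁ ∩ E).Nonempty := Set.not_disjoint_iff_nonempty_inter.mp fun hDE => by
    obtain ⟨d, hd, hxd⟩ := hD₁.dominates x₃ hx₃
    exact hno ⟨x₃, d, hxd, .inr (hD₁Z hd), .inr (hD₂Z (sub hD₁ h₁₂ hDE hd)), .inl hx₃'⟩
  obtain ⟨e', he₃, he'E⟩ : (D₃ ∩ E).Nonempty := Set.not_disjoint_iff_nonempty_inter.mp fun hDE => by
    obtain ⟨d, hd, hxd⟩ := hD₃.dominates x₁ hx₁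
    exact hno ⟨x₁, d, hxd, .inl hx₁', .inr (hD₂Z (sub hD₃ h₃₂ hDE hd)), .inr (hD₃Z hd)⟩
  obtain rfl := hE heE he'E
  obtain ⟨-, d, hd, hde⟩ : e ∈ Nbhd G D₂ := hD₂.2 ▸ Or.inr heE
  exact hno ⟨e, d, hde.symm, .inl (hD₁Z he₁), .inr (hD₂Z hd), .inl (hD₃Z he₃)⟩

/-- No vertex of `A` lies in two of the `Zᵢ`, so `S₁` and `S₃` each contain two vertices of `A`
and at most one other vertex, which the attached sets of the other two sides must share. -/
theorem edgeMeets_of_containsFullComp [Finite V] {Y₁ S₁ Y₃ S₃ : Set V}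
    (hs₁ : IsSeparation G Y₁ S₁ Z₁) (hS₁ : S₁.ncard ≤ 3) (hc₁ : ContainsFullComp G A Z₁)
    (hc₂ : ContainsFullComp G A Z₂)
    (hs₃ : IsSeparation G Y₃ S₃ Z₃) (hS₃ : S₃.ncard ≤ 3) (hc₃ : ContainsFullComp G A Z₃)
    {x₁ x₂ x₃ : V} (hx₁ : x₁ ∈ A) (hx₁' : x₁ ∈ Z₁) (hx₂ : x₂ ∈ A) (hx₂' : x₂ ∈ Z₂)
    (hx₃ : x₃ ∈ A) (hx₃' : x₃ ∈ Z₃) : EdgeMeets G Z₁ Z₂ Z₃ := by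
  by_contra hno
  have hd₁ := hc₁.dominates
  have hd₂ := hc₂.dominates
  have hd₃ := hc₃.dominates
  obtain ⟨_, D₁, -, hD₁, hD₁Z⟩ := hc₁
  obtain ⟨E, D₂, hE, hD₂, hD₂Z⟩ := hc₂
  obtain ⟨_, D₃, -, hD₃, hD₃Z⟩ := hc₃
  have hA₁ := hD₁.isAttached (A := A) Set.subset_union_left
  have hA₂ := hD₂.isAttached (A := A) Set.subset_union_left
  have hA₃ := hD₃.isAttached (A := A) Set.subset_union_left
  have hx₂₁ : x₂ ∉ Z₁ := fun h => hno (hd₃.edgeMeets hx₂ h hx₂').rotate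
  have hx₃₁ : x₃ ∉ Z₁ := fun h => hno (hd₂.edgeMeets hx₃ h hx₃').swap
  have hx₁₃ : x₁ ∉ Z₃ := fun h => hno (hd₂.edgeMeets hx₁ hx₁' h).swap
  have hx₂₃ : x₂ ∉ Z₃ := fun h => hno (hd₁.edgeMeets hx₂ hx₂' h)
  have hS₁' := ncard_sdiff_le_one hS₁ ⟨hs₁.mem_of_dominates hd₁ hx₂ hx₂₁, hx₂⟩
    ⟨hs₁.mem_of_dominates hd₁ hx₃ hx₃₁, hx₃⟩ fun h => hx₂₃ (h ▸ hx₃')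
  have hS₃' := ncard_sdiff_le_one hS₃ ⟨hs₃.mem_of_dominates hd₃ hx₁ hx₁₃, hx₁⟩
    ⟨hs₃.mem_of_dominates hd₃ hx₂ hx₂₃, hx₂⟩ fun h => hx₂₁ (h ▸ hx₁')
  have h₁₂ := inter_nonempty_of_ncard_sdiff_le_one hS₃' hA₁.disjoint hA₂.disjoint
    (hs₃.inter_nonempty_of_not_edgeMeets hA₁ hD₁Z hx₃ hx₃' hx₂ hx₂' fun h => hno h.rotate)
    (hs₃.inter_nonempty_of_not_edgeMeets hA₂ hD₂Z hx₃ hx₃' hx₁ hx₁' fun h => hno h.rotate.swap)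
  have h₃₂ := inter_nonempty_of_ncard_sdiff_le_one hS₁' hA₃.disjoint hA₂.disjoint
    (hs₁.inter_nonempty_of_not_edgeMeets hA₃ hD₃Z hx₁ hx₁' hx₂ hx₂' fun h => hno h.swap.rotate)
    (hs₁.inter_nonempty_of_not_edgeMeets hA₂ hD₂Z hx₁ hx₁' hx₃ hx₃' hno)
  exact hno (edgeMeets_of_inter_nonempty hA₁ hD₁Z hD₂ hE hD₂Z hA₃ hD₃Z hx₁ hx₁' hx₃ hx₃' h₁₂ h₃₂)

end EdgeMeets

structure SplitFreeSep (G : SimpleGraph V) (Y₀ S₀ Z₀ : Set V) : Prop where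
  kConnected : KConnected 3 G
  isSeparation : IsSeparation G Y₀ S₀ Z₀
  left_nonempty : Y₀.Nonempty
  right_nonempty : Z₀.Nonempty
  ncard_eq : S₀.ncard = 3
  right_connected : (G.induce Z₀).Connected
  not_splitVertex : ¬ ∃ z : V, SplitVertex G S₀ Z₀ z

def BigSide (S₀ Z₀ Y Z : Set V) : Prop :=
  Z₀ ⊆ Z ∨ (Y ∩ S₀).ncard < (Z ∩ S₀).ncard

namespace SplitFreeSep

variable {G : SimpleGraph V} {Y₀ S₀ Z₀ Y S Z Y₁ S₁ Z₁ Y₂ S₂ Z₂ Y₃ S₃ Z₃ : Set V}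

theorem separator_nonempty (h : SplitFreeSep G Y₀ S₀ Z₀) : S₀.Nonempty :=
  Set.nonempty_of_ncard_ne_zero (by rw [h.ncard_eq]; norm_num)

theorem subset_right_of_fullComp (h : SplitFreeSep G Y₀ S₀ Z₀) {z : V} (hz : z ∈ Z₀) {C : Set V}
    (hC : IsFullComp G (S₀ ∪ {z}) C) : C ⊆ Z₀ := by
  obtain ⟨-, c, hc, hcz⟩ := (hC.2.symm ▸ Or.inr rfl : z ∈ Nbhd G C)
  exact h.isSeparation.subset_right_of_adj hC.1.2.1.preconnected
    (hC.1.disjoint.mono_right Set.subset_union_left) hc hz hcz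

variable [Finite V]

theorem dominates_right (h : SplitFreeSep G Y₀ S₀ Z₀) : Dominates G S₀ Z₀ :=
  fun _ ha => h.kConnected.exists_adj_of_mem h.isSeparation h.left_nonempty h.right_nonempty
    h.ncard_eq.le ha

theorem dominates_left (h : SplitFreeSep G Y₀ S₀ Z₀) : Dominates G S₀ Y₀ :=
  fun _ ha => h.kConnected.exists_adj_of_mem h.isSeparation.symm h.right_nonempty
    h.left_nonempty h.ncard_eq.le ha

theorem exists_fullComp_right (h : SplitFreeSep G Y₀ S₀ Z₀) {z : V} (hz : z ∈ Z₀) :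
    ∃ C, IsFullComp G (S₀ ∪ {z}) C := by
  have hsplit := h.not_splitVertex
  simp only [SplitVertex, not_exists, not_and, not_forall] at hsplit
  obtain ⟨C, hC, hC3⟩ := hsplit z hz
  have hX : (S₀ ∪ {z}).ncard = 4 := by
    rw [Set.union_singleton, Set.ncard_insert_of_notMem
      (Set.disjoint_right.mp h.isSeparation.2.2.1 hz), h.ncard_eq]
  refine ⟨C, hC, hC.nbhd_subset.antisymm fun x hx => ?_⟩
  by_contra hxN
  have h3 := h.kConnected.le_ncard_nbhd hC (Set.disjoint_right.mp hC.disjoint hx) hxN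
  have h4 := Set.ncard_le_ncard hC.nbhd_subset
  exact hxN (Set.eq_of_subset_of_ncard_le hC.nbhd_subset (by omega) ▸ hx)

theorem exists_fullComp_left (h : SplitFreeSep G Y₀ S₀ Z₀) {y : V} (hy : y ∈ Y₀) :
    ∃ B, IsFullComp G S₀ B ∧ B ⊆ Y₀ ∧ y ∈ B := by
  obtain ⟨B, hB, hyB⟩ := exists_isCompOutside G (Set.disjoint_left.mp h.isSeparation.1 hy)
  have hBY : B ⊆ Y₀ :=
    (h.isSeparation.subset_or_subset_of_preconnected hB.2.1.preconnected hB.disjoint).resolve_right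
      fun hBZ => Set.disjoint_left.mp h.isSeparation.2.1 hy (hBZ hyB)
  obtain ⟨z, hz⟩ := h.right_nonempty
  have h3 := h.kConnected.le_ncard_nbhd hB (fun hzB => Set.disjoint_left.mp h.isSeparation.2.1
    (hBY hzB) hz) (fun hzN => Set.disjoint_left.mp h.isSeparation.2.2.1 (hB.nbhd_subset hzN) hz)
  refine ⟨B, ⟨hB, Set.eq_of_subset_of_ncard_le hB.nbhd_subset ?_⟩, hBY, hyB⟩
  rwa [h.ncard_eq]

theorem two_le_ncard_right_inter (h : SplitFreeSep G Y₀ S₀ Z₀) {S' : Set V}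
    (hS' : ∀ z ∈ Z₀, ∀ C, IsFullComp G (S₀ ∪ {z}) C → (C ∩ S').Nonempty) :
    2 ≤ (Z₀ ∩ S').ncard := by
  obtain ⟨z, hz⟩ := h.right_nonempty
  obtain ⟨C, hC⟩ := h.exists_fullComp_right hz
  obtain ⟨σ, hσC, hσS⟩ := hS' z hz C hC
  have hσ : σ ∈ Z₀ := h.subset_right_of_fullComp hz hC hσC
  obtain ⟨C', hC'⟩ := h.exists_fullComp_right hσ
  obtain ⟨τ, hτC', hτS⟩ := hS' σ hσ C' hC'
  have hστ : σ ≠ τ := by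
    rintro rfl
    exact Set.disjoint_left.mp hC'.1.disjoint hτC' (Or.inr rfl)
  exact (Set.one_lt_ncard_iff).mpr
    ⟨σ, τ, ⟨hσ, hσS⟩, ⟨h.subset_right_of_fullComp hσ hC' hτC', hτS⟩, hστ⟩

theorem bigSide_or_bigSide (h : SplitFreeSep G Y₀ S₀ Z₀) (hs : IsSeparation G Y S Z)
    (hS : S.ncard ≤ 3) : BigSide S₀ Z₀ Y Z ∨ BigSide S₀ Z₀ Z Y := by
  by_contra! hcon
  simp only [BigSide, not_or, not_lt] at hcon
  obtain ⟨⟨hZ₀Z, hle⟩, hZ₀Y, hge⟩ := hcon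
  obtain ⟨u, huZ₀, huS⟩ : (Z₀ ∩ S).Nonempty := by
    refine Set.not_disjoint_iff_nonempty_inter.mp fun hZ₀S => ?_
    rcases hs.subset_or_subset_of_preconnected h.right_connected.preconnected hZ₀S with h' | h'
    exacts [hZ₀Y h', hZ₀Z h']
  have hS₀ := hs.ncard_inter_add S₀
  have hSpart := h.isSeparation.ncard_inter_add S
  have hu : 1 ≤ (Z₀ ∩ S).ncard := (Set.ncard_pos).mpr ⟨u, huZ₀, huS⟩
  rw [h.ncard_eq] at hS₀
  rw [Set.inter_comm S₀ S] at hSpart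
  obtain ⟨p, hpY, hpS₀⟩ : (Y ∩ S₀).Nonempty := (Set.ncard_pos).mp (by omega)
  obtain ⟨q, hqZ, hqS₀⟩ : (Z ∩ S₀).Nonempty := (Set.ncard_pos).mp (by omega)
  obtain ⟨C, hC⟩ := h.exists_fullComp_right huZ₀
  obtain ⟨v, hvC, hvS⟩ := hs.inter_nonempty_of_isAttached (hC.isAttached Set.subset_union_left)
    hpS₀ hpY hqS₀ hqZ
  have huv : u ≠ v := by
    rintro rfl
    exact Set.disjoint_left.mp hC.1.disjoint hvC (Or.inr rfl)
  have hZ₀S : 2 ≤ (Z₀ ∩ S).ncard := (Set.one_lt_ncard_iff).mpr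
    ⟨u, v, ⟨huZ₀, huS⟩, ⟨h.subset_right_of_fullComp huZ₀ hC hvC, hvS⟩, huv⟩
  obtain ⟨y, hy⟩ := h.left_nonempty
  obtain ⟨B, hB, hBY₀, -⟩ := h.exists_fullComp_left hy
  obtain ⟨w, hwB, hwS⟩ := hs.inter_nonempty_of_isAttached (hB.isAttached subset_rfl)
    hpS₀ hpY hqS₀ hqZ
  have hY₀S : 1 ≤ (Y₀ ∩ S).ncard := (Set.ncard_pos).mpr ⟨w, hBY₀ hwB, hwS⟩
  omega

theorem left_preconnected (h : SplitFreeSep G Y₀ S₀ Z₀) {w : V}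
    (hw : ∀ B, IsFullComp G S₀ B → B ⊆ Y₀ → w ∈ B) : (G.induce Y₀).Preconnected := by
  obtain ⟨y, hy⟩ := h.left_nonempty
  obtain ⟨B, hB, hBY₀, -⟩ := h.exists_fullComp_left hy
  suffices Y₀ = B from this ▸ hB.1.2.1.preconnected
  refine Set.Subset.antisymm (fun y hy => ?_) hBY₀
  obtain ⟨B', hB', hB'Y₀, hyB'⟩ := h.exists_fullComp_left hy
  exact hB.1.eq_of_mem hB'.1 (hw B hB hBY₀) (hw B' hB' hB'Y₀) ▸ hyB'

/-- A vertex of `Y₀ \ Z` other than `w` would lie in a component of `G - (S₀ ∪ {w})` inside `Y₀`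
with at least two neighbours in `S₀`, one of them in `Z`, forcing the component into `Z`. -/
theorem left_sdiff_subset_singleton (h : SplitFreeSep G Y₀ S₀ Z₀) (hs : IsSeparation G Y S Z)
    {w : V} (hw : Y₀ ∩ S ⊆ {w}) (hZ : 2 ≤ (Z ∩ S₀).ncard) : Y₀ \ Z ⊆ {w} := by
  rintro y ⟨hyY₀, hyZ⟩
  by_contra hyw
  have hyX : y ∉ S₀ ∪ {w} := by
    rintro (hyS₀ | hyw')
    exacts [Set.disjoint_left.mp h.isSeparation.1 hyY₀ hyS₀, hyw hyw']
  obtain ⟨E, hE, hyE⟩ := exists_isCompOutside G hyX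
  have hEY₀ : E ⊆ Y₀ :=
    (h.isSeparation.subset_or_subset_of_preconnected hE.2.1.preconnected
      (hE.disjoint.mono_right Set.subset_union_left)).resolve_right
      fun hEZ₀ => Set.disjoint_left.mp h.isSeparation.2.1 hyY₀ (hEZ₀ hyE)
  have hES : Disjoint E S := Set.disjoint_left.mpr fun e he heS =>
    Set.disjoint_left.mp hE.disjoint he (Or.inr (hw ⟨hEY₀ he, heS⟩))
  have hN : 2 ≤ (Nbhd G E ∩ S₀).ncard := by
    obtain ⟨z, hz⟩ := h.right_nonempty
    have h3 := h.kConnected.le_ncard_nbhd hE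
      (fun hzE => Set.disjoint_left.mp h.isSeparation.2.1 (hEY₀ hzE) hz)
      fun ⟨_, e, he, hez⟩ => h.isSeparation.2.2.2.2 e (hEY₀ he) z hz hez
    have hdiff : (Nbhd G E \ S₀).ncard ≤ 1 := by
      refine (Set.ncard_le_ncard fun x hx => ?_).trans (Set.ncard_singleton w).le
      rcases hE.nbhd_subset hx.1 with hxS₀ | hxw
      exacts [(hx.2 hxS₀).elim, hxw]
    have := Set.ncard_inter_add_ncard_sdiff_eq_ncard (Nbhd G E) S₀
    omega
  obtain ⟨x, ⟨hxN, -⟩, hxZ, -⟩ := inter_nonempty_of_ncard_lt_add (A := Nbhd G E ∩ S₀)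
    (B := Z ∩ S₀) Set.inter_subset_right Set.inter_subset_right (by rw [h.ncard_eq]; omega)
  obtain ⟨-, e, he, hex⟩ := hxN
  exact hyZ (hs.subset_right_of_adj hE.2.1.preconnected hES he hxZ hex hyE)

theorem containsFullComp_or_of_lt (h : SplitFreeSep G Y₀ S₀ Z₀) (hs : IsSeparation G Y S Z)
    (hS : S.ncard ≤ 3) (hlt : (Y ∩ S₀).ncard < (Z ∩ S₀).ncard) :
    ContainsFullComp G S₀ Z ∨
      (G.induce Y₀).Preconnected ∧ (Y₀ \ Z).ncard ≤ 1 ∧ (S₀ \ Z).ncard ≤ 1 := by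
  obtain ⟨q, hqZ, hqS₀⟩ : (Z ∩ S₀).Nonempty := (Set.ncard_pos).mp (by omega)
  by_cases hC : ∃ z ∈ Z₀, ∃ C, IsFullComp G (S₀ ∪ {z}) C ∧ Disjoint C S
  · obtain ⟨z, -, C, hC, hCS⟩ := hC
    exact Or.inl ⟨{z}, C, Set.subsingleton_singleton, hC,
      hs.subset_of_isAttached (hC.isAttached Set.subset_union_left) hCS hqS₀ hqZ⟩
  by_cases hB : ∃ B, IsFullComp G S₀ B ∧ Disjoint B S
  · obtain ⟨B, hB, hBS⟩ := hB
    exact Or.inl ⟨∅, B, Set.subsingleton_empty, by rwa [Set.union_empty],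
      hs.subset_of_isAttached (hB.isAttached subset_rfl) hBS hqS₀ hqZ⟩
  push Not at hC hB
  -- `S` now has two vertices in `Z₀`, one vertex `w` in `Y₀`, and none in `S₀`.
  have hZ₀S := h.two_le_ncard_right_inter fun z hz C hC' =>
    Set.not_disjoint_iff_nonempty_inter.mp (hC z hz C hC')
  obtain ⟨y, hy⟩ := h.left_nonempty
  obtain ⟨B, hB', hBY₀, -⟩ := h.exists_fullComp_left hy
  obtain ⟨w, hwB, hwS⟩ := Set.not_disjoint_iff_nonempty_inter.mp (hB B hB')
  have hSpart := h.isSeparation.ncard_inter_add S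
  have hS₀part := hs.ncard_inter_add S₀
  rw [Set.inter_comm S₀ S] at hSpart
  rw [h.ncard_eq] at hS₀part
  have hY₀S : 1 ≤ (Y₀ ∩ S).ncard := (Set.ncard_pos).mpr ⟨w, hBY₀ hwB, hwS⟩
  have hwY : Y₀ ∩ S ⊆ {w} := fun x hx =>
    (Set.ncard_le_one_iff).mp (by omega) hx ⟨hBY₀ hwB, hwS⟩
  have hSS₀ : S ∩ S₀ = ∅ := (Set.ncard_eq_zero).mp (by omega)
  refine Or.inr ⟨h.left_preconnected (w := w) fun B' hB'' hB'Y₀ => ?_, ?_, ?_⟩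
  · obtain ⟨w', hw'B', hw'S⟩ := Set.not_disjoint_iff_nonempty_inter.mp (hB B' hB'')
    exact Set.mem_singleton_iff.mp (hwY ⟨hB'Y₀ hw'B', hw'S⟩) ▸ hw'B'
  · exact (Set.ncard_le_ncard (h.left_sdiff_subset_singleton hs hwY (by omega))).trans
      (Set.ncard_singleton w).le
  · have hsub : S₀ \ Z ⊆ Y ∩ S₀ := fun x ⟨hxS₀, hxZ⟩ =>
      ⟨hs.mem_left (fun hxS => hSS₀.subset ⟨hxS, hxS₀⟩) hxZ, hxS₀⟩
    have := Set.ncard_le_ncard hsub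
    omega

theorem edgeMeets_of_subset_of_subset (h : SplitFreeSep G Y₀ S₀ Z₀) (h₁ : Z₀ ⊆ Z₁)
    (h₂ : Z₀ ⊆ Z₂) (h₃ : Z₀ ⊆ Z₃ ∨ (Z₃ ∩ S₀).Nonempty) : EdgeMeets G Z₁ Z₂ Z₃ := by
  rcases h₃ with h₃ | ⟨a, ha₃, ha⟩
  · obtain ⟨a, ha⟩ := h.separator_nonempty
    obtain ⟨z, hz, haz⟩ := h.dominates_right a ha
    exact ⟨a, z, haz, .inr (h₁ hz), .inr (h₂ hz), .inr (h₃ hz)⟩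
  · obtain ⟨z, hz, haz⟩ := h.dominates_right a ha
    exact ⟨a, z, haz, .inr (h₁ hz), .inr (h₂ hz), .inl ha₃⟩

/-- A full component at a vertex of `Z₀` lies in `Z₀ ⊆ Z₁` and has a neighbour `q ∈ Z₃`, so it
cannot lie in `Z₂` and therefore meets `S₂`; this puts two vertices of `Z₀` into `S₂`. -/
theorem ncard_inter_le_one_of_not_edgeMeets (h : SplitFreeSep G Y₀ S₀ Z₀) (h₁ : Z₀ ⊆ Z₁)
    (hs₂ : IsSeparation G Y₂ S₂ Z₂) (hS₂ : S₂.ncard ≤ 3) {x q : V} (hx : x ∈ S₀) (hx₂ : x ∈ Z₂)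
    (hq : q ∈ S₀) (hq₃ : q ∈ Z₃) (hno : ¬ EdgeMeets G Z₁ Z₂ Z₃) : (S₂ ∩ S₀).ncard ≤ 1 := by
  have hZ₀S₂ := h.two_le_ncard_right_inter fun z hz C hC =>
    Set.not_disjoint_iff_nonempty_inter.mp fun hCS => by
      have hC' := hC.isAttached (A := S₀) Set.subset_union_left
      obtain ⟨c, hc, hqc⟩ := hC'.dominates q hq
      exact hno ⟨q, c, hqc, .inr (h₁ (h.subset_right_of_fullComp hz hC hc)),
        .inr (hs₂.subset_of_isAttached hC' hCS hx hx₂ hc), .inl hq₃⟩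
  have := h.isSeparation.ncard_inter_add S₂
  rw [Set.inter_comm S₀ S₂] at this
  omega

theorem edgeMeets_of_subset_of_dominates (h : SplitFreeSep G Y₀ S₀ Z₀) (h₁ : Z₀ ⊆ Z₁)
    (hs₂ : IsSeparation G Y₂ S₂ Z₂) (hS₂ : S₂.ncard ≤ 3) (hd₂ : Dominates G S₀ Z₂)
    (hs₃ : IsSeparation G Y₃ S₃ Z₃) (hS₃ : S₃.ncard ≤ 3) (hd₃ : Dominates G S₀ Z₃)
    {x₂ x₃ : V} (hx₂ : x₂ ∈ S₀) (hx₂' : x₂ ∈ Z₂) (hx₃ : x₃ ∈ S₀) (hx₃' : x₃ ∈ Z₃) :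
    EdgeMeets G Z₁ Z₂ Z₃ := by
  by_contra hno
  have h₂ := h.ncard_inter_le_one_of_not_edgeMeets h₁ hs₂ hS₂ hx₂ hx₂' hx₃ hx₃' hno
  have h₃ := h.ncard_inter_le_one_of_not_edgeMeets h₁ hs₃ hS₃ hx₃ hx₃' hx₂ hx₂'
    fun h => hno h.swap.rotate
  have hsub : S₀ ⊆ S₂ ∩ S₀ ∪ S₃ ∩ S₀ := by
    intro a ha
    by_cases ha₂ : a ∈ Z₂
    · by_cases ha₃ : a ∈ Z₃
      · exact (hno ((h.dominates_right.mono h₁).edgeMeets ha ha₂ ha₃)).elim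
      · exact Or.inr ⟨hs₃.mem_of_dominates hd₃ ha ha₃, ha⟩
    · exact Or.inl ⟨hs₂.mem_of_dominates hd₂ ha ha₂, ha⟩
  have := (Set.ncard_le_ncard hsub).trans (Set.ncard_union_le _ _)
  rw [h.ncard_eq] at this
  omega

theorem edgeMeets_of_subset_of_dominates_of_sdiff (h : SplitFreeSep G Y₀ S₀ Z₀) (h₁ : Z₀ ⊆ Z₁)
    (hs₂ : IsSeparation G Y₂ S₂ Z₂) (hS₂ : S₂.ncard ≤ 3) (hd₂ : Dominates G S₀ Z₂)
    {x : V} (hx : x ∈ S₀) (hx₂ : x ∈ Z₂) (h₃ : (S₀ \ Z₃).ncard ≤ 1) : EdgeMeets G Z₁ Z₂ Z₃ := by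
  by_contra hno
  obtain ⟨q, r, ⟨hq, hq₃⟩, ⟨hr, hr₃⟩, hqr⟩ :=
    (Set.one_lt_ncard_iff).mp (one_lt_ncard_inter h.ncard_eq.ge h₃)
  have hle := h.ncard_inter_le_one_of_not_edgeMeets h₁ hs₂ hS₂ hx hx₂ hq hq₃ hno
  have hmem : ∀ a ∈ S₀, a ∈ Z₃ → a ∈ S₂ ∩ S₀ := fun a ha ha₃ =>
    ⟨hs₂.mem_of_dominates hd₂ ha fun ha₂ =>
      hno ((h.dominates_right.mono h₁).edgeMeets ha ha₂ ha₃), ha⟩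
  exact hqr ((Set.ncard_le_one_iff).mp hle (hmem q hq hq₃) (hmem r hr hr₃))

theorem ncard_inter_add_ncard_inter_le_one (h : SplitFreeSep G Y₀ S₀ Z₀)
    (hS : S.ncard ≤ 3) {q r : V} (hq : q ∈ S ∩ S₀) (hr : r ∈ S ∩ S₀) (hqr : q ≠ r) :
    (Y₀ ∩ S).ncard + (Z₀ ∩ S).ncard ≤ 1 := by
  have := (Set.one_lt_ncard_iff).mpr ⟨q, r, hq, hr, hqr⟩
  have := h.isSeparation.ncard_inter_add S
  rw [Set.inter_comm S₀ S] at this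
  omega

/-- `Z₁` and `Z₂` share their vertex of `S₀`, while `S₀ ∩ Z₃` has two vertices lying in both `S₁`
and `S₂`. Each full component at a vertex of `Z₀` meets `S₁ ∪ S₂`, so `S₁` and `S₂` have no
vertex in `Y₀`, and the connected set `Y₀` lies in `Z₁ ∩ Z₂`. -/
theorem edgeMeets_of_dominates_of_sdiff (h : SplitFreeSep G Y₀ S₀ Z₀)
    (hs₁ : IsSeparation G Y₁ S₁ Z₁) (hS₁ : S₁.ncard ≤ 3) (hd₁ : Dominates G S₀ Z₁)
    (hs₂ : IsSeparation G Y₂ S₂ Z₂) (hS₂ : S₂.ncard ≤ 3) (hd₂ : Dominates G S₀ Z₂)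
    {x₁ x₂ : V} (hx₁ : x₁ ∈ S₀) (hx₁' : x₁ ∈ Z₁) (hx₂ : x₂ ∈ S₀) (hx₂' : x₂ ∈ Z₂)
    (hY₀ : (G.induce Y₀).Preconnected) (h₃ : (S₀ \ Z₃).ncard ≤ 1) : EdgeMeets G Z₁ Z₂ Z₃ := by
  by_contra hno
  have n₁ : ∀ a ∈ S₀, a ∈ Z₃ → a ∉ Z₁ := fun a ha ha₃ ha₁ => hno (hd₂.edgeMeets ha ha₁ ha₃).swap
  have n₂ : ∀ a ∈ S₀, a ∈ Z₃ → a ∉ Z₂ := fun a ha ha₃ ha₂ => hno (hd₁.edgeMeets ha ha₂ ha₃)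
  obtain rfl : x₁ = x₂ := (Set.ncard_le_one_iff).mp h₃
    ⟨hx₁, fun h' => n₁ x₁ hx₁ h' hx₁'⟩ ⟨hx₂, fun h' => n₂ x₂ hx₂ h' hx₂'⟩
  obtain ⟨q, r, ⟨hq, hq₃⟩, ⟨hr, hr₃⟩, hqr⟩ :=
    (Set.one_lt_ncard_iff).mp (one_lt_ncard_inter h.ncard_eq.ge h₃)
  have h₁ := h.ncard_inter_add_ncard_inter_le_one hS₁
    ⟨hs₁.mem_of_dominates hd₁ hq (n₁ q hq hq₃), hq⟩
    ⟨hs₁.mem_of_dominates hd₁ hr (n₁ r hr hr₃), hr⟩ hqr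
  have h₂ := h.ncard_inter_add_ncard_inter_le_one hS₂
    ⟨hs₂.mem_of_dominates hd₂ hq (n₂ q hq hq₃), hq⟩
    ⟨hs₂.mem_of_dominates hd₂ hr (n₂ r hr hr₃), hr⟩ hqr
  have hZ₀ := h.two_le_ncard_right_inter (S' := S₁ ∪ S₂) fun z hz C hC =>
    Set.not_disjoint_iff_nonempty_inter.mp fun hCS => by
      have hC' := hC.isAttached (A := S₀) Set.subset_union_left
      obtain ⟨c, hc, hqc⟩ := hC'.dominates q hq
      exact hno ⟨q, c, hqc,
        .inr (hs₁.subset_of_isAttached hC' (hCS.mono_right Set.subset_union_left) hx₁ hx₁' hc),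
        .inr (hs₂.subset_of_isAttached hC' (hCS.mono_right Set.subset_union_right) hx₁ hx₂' hc),
        .inl hq₃⟩
  have := Set.inter_union_distrib_left Z₀ S₁ S₂ ▸ Set.ncard_union_le (Z₀ ∩ S₁) (Z₀ ∩ S₂)
  have hY₀S : ∀ {S : Set V}, (Y₀ ∩ S).ncard = 0 → Disjoint Y₀ S := fun h0 =>
    Set.disjoint_iff_inter_eq_empty.mpr ((Set.ncard_eq_zero).mp h0)
  obtain ⟨y, hy, hxy⟩ := h.dominates_left x₁ hx₁
  have hY₁ := hs₁.subset_right_of_adj hY₀ (hY₀S (by omega)) hy hx₁' hxy.symm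
  have hY₂ := hs₂.subset_right_of_adj hY₀ (hY₀S (by omega)) hy hx₂' hxy.symm
  obtain ⟨y', hy', hqy'⟩ := h.dominates_left q hq
  exact hno ⟨q, y', hqy', .inr (hY₁ hy'), .inr (hY₂ hy'), .inl hq₃⟩

theorem edgeMeets_of_subset (h : SplitFreeSep G Y₀ S₀ Z₀) (h₁ : Z₀ ⊆ Z₁)
    (hs₂ : IsSeparation G Y₂ S₂ Z₂) (hS₂ : S₂.ncard ≤ 3)
    (hlt₂ : (Y₂ ∩ S₀).ncard < (Z₂ ∩ S₀).ncard)
    (hs₃ : IsSeparation G Y₃ S₃ Z₃) (hS₃ : S₃.ncard ≤ 3)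
    (hlt₃ : (Y₃ ∩ S₀).ncard < (Z₃ ∩ S₀).ncard) :
    EdgeMeets G Z₁ Z₂ Z₃ := by
  obtain ⟨x₂, hx₂', hx₂⟩ := Set.nonempty_of_ncard_ne_zero (Nat.ne_zero_of_lt hlt₂)
  obtain ⟨x₃, hx₃', hx₃⟩ := Set.nonempty_of_ncard_ne_zero (Nat.ne_zero_of_lt hlt₃)
  rcases h.containsFullComp_or_of_lt hs₂ hS₂ hlt₂ with hc₂ | ⟨-, -, h₂⟩ <;>
    rcases h.containsFullComp_or_of_lt hs₃ hS₃ hlt₃ with hc₃ | ⟨-, -, h₃⟩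
  · exact h.edgeMeets_of_subset_of_dominates h₁ hs₂ hS₂ hc₂.dominates hs₃ hS₃ hc₃.dominates
      hx₂ hx₂' hx₃ hx₃'
  · exact h.edgeMeets_of_subset_of_dominates_of_sdiff h₁ hs₂ hS₂ hc₂.dominates hx₂ hx₂' h₃
  · exact (h.edgeMeets_of_subset_of_dominates_of_sdiff h₁ hs₃ hS₃ hc₃.dominates hx₃ hx₃'
      h₂).swap.rotate
  · exact (h.dominates_right.mono h₁).edgeMeets_of_ncard_sdiff h.ncard_eq.ge h₂ h₃

theorem edgeMeets_of_lt (h : SplitFreeSep G Y₀ S₀ Z₀) (hnd : ¬ Degenerate G Y₀ S₀ Z₀)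
    (hs₁ : IsSeparation G Y₁ S₁ Z₁) (hS₁ : S₁.ncard ≤ 3)
    (hlt₁ : (Y₁ ∩ S₀).ncard < (Z₁ ∩ S₀).ncard)
    (hs₂ : IsSeparation G Y₂ S₂ Z₂) (hS₂ : S₂.ncard ≤ 3)
    (hlt₂ : (Y₂ ∩ S₀).ncard < (Z₂ ∩ S₀).ncard)
    (hs₃ : IsSeparation G Y₃ S₃ Z₃) (hS₃ : S₃.ncard ≤ 3)
    (hlt₃ : (Y₃ ∩ S₀).ncard < (Z₃ ∩ S₀).ncard) :
    EdgeMeets G Z₁ Z₂ Z₃ := by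
  obtain ⟨x₁, hx₁', hx₁⟩ := Set.nonempty_of_ncard_ne_zero (Nat.ne_zero_of_lt hlt₁)
  obtain ⟨x₂, hx₂', hx₂⟩ := Set.nonempty_of_ncard_ne_zero (Nat.ne_zero_of_lt hlt₂)
  obtain ⟨x₃, hx₃', hx₃⟩ := Set.nonempty_of_ncard_ne_zero (Nat.ne_zero_of_lt hlt₃)
  have h3 := h.ncard_eq.ge
  rcases h.containsFullComp_or_of_lt hs₁ hS₁ hlt₁ with hc₁ | ⟨hY, hY₁, h₁⟩ <;>
    rcases h.containsFullComp_or_of_lt hs₂ hS₂ hlt₂ with hc₂ | ⟨hY, hY₂, h₂⟩ <;>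
    rcases h.containsFullComp_or_of_lt hs₃ hS₃ hlt₃ with hc₃ | ⟨hY, hY₃, h₃⟩
  · exact edgeMeets_of_containsFullComp hs₁ hS₁ hc₁ hc₂ hs₃ hS₃ hc₃ hx₁ hx₁' hx₂ hx₂' hx₃ hx₃'
  · exact h.edgeMeets_of_dominates_of_sdiff hs₁ hS₁ hc₁.dominates hs₂ hS₂ hc₂.dominates
      hx₁ hx₁' hx₂ hx₂' hY h₃
  · exact (h.edgeMeets_of_dominates_of_sdiff hs₁ hS₁ hc₁.dominates hs₃ hS₃ hc₃.dominates
      hx₁ hx₁' hx₃ hx₃' hY h₂).swap.rotate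
  · exact hc₁.dominates.edgeMeets_of_ncard_sdiff h3 h₂ h₃
  · exact (h.edgeMeets_of_dominates_of_sdiff hs₂ hS₂ hc₂.dominates hs₃ hS₃ hc₃.dominates
      hx₂ hx₂' hx₃ hx₃' hY h₁).rotate.rotate
  · exact (hc₂.dominates.edgeMeets_of_ncard_sdiff h3 h₁ h₃).swap
  · exact (hc₃.dominates.edgeMeets_of_ncard_sdiff h3 h₁ h₂).rotate
  · exact edgeMeets_of_not_degenerate hnd h.left_nonempty hY hY₁ hY₂ hY₃ h₁ h₂ h₃

theorem edgeMeets (h : SplitFreeSep G Y₀ S₀ Z₀) (hnd : ¬ Degenerate G Y₀ S₀ Z₀)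
    (hs₁ : IsSeparation G Y₁ S₁ Z₁) (hS₁ : S₁.ncard ≤ 3) (hb₁ : BigSide S₀ Z₀ Y₁ Z₁)
    (hs₂ : IsSeparation G Y₂ S₂ Z₂) (hS₂ : S₂.ncard ≤ 3) (hb₂ : BigSide S₀ Z₀ Y₂ Z₂)
    (hs₃ : IsSeparation G Y₃ S₃ Z₃) (hS₃ : S₃.ncard ≤ 3) (hb₃ : BigSide S₀ Z₀ Y₃ Z₃) :
    EdgeMeets G Z₁ Z₂ Z₃ := by
  have hne : ∀ {Y Z : Set V}, (Y ∩ S₀).ncard < (Z ∩ S₀).ncard → (Z ∩ S₀).Nonempty :=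
    fun hlt => Set.nonempty_of_ncard_ne_zero (Nat.ne_zero_of_lt hlt)
  rcases hb₁ with h₁ | h₁ <;> rcases hb₂ with h₂ | h₂ <;> rcases hb₃ with h₃ | h₃
  · exact h.edgeMeets_of_subset_of_subset h₁ h₂ (.inl h₃)
  · exact h.edgeMeets_of_subset_of_subset h₁ h₂ (.inr (hne h₃))
  · exact (h.edgeMeets_of_subset_of_subset h₁ h₃ (.inr (hne h₂))).swap.rotate
  · exact h.edgeMeets_of_subset h₁ hs₂ hS₂ h₂ hs₃ hS₃ h₃
  · exact (h.edgeMeets_of_subset_of_subset h₂ h₃ (.inr (hne h₁))).rotate.rotate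
  · exact (h.edgeMeets_of_subset h₂ hs₁ hS₁ h₁ hs₃ hS₃ h₃).swap
  · exact (h.edgeMeets_of_subset h₃ hs₁ hS₁ h₁ hs₂ hS₂ h₂).rotate
  · exact h.edgeMeets_of_lt hnd hs₁ hS₁ h₁ hs₂ hS₂ h₂ hs₃ hS₃ h₃

end SplitFreeSep

/-- a proper non-degenerate separation (Y₀,S₀,Z₀) of order 3 with Z₀
connected and no split vertex defines a tangle of order 4. -/
theorem statement19 {V : Type*} [Fintype V] (G : SimpleGraph V)
    (h3 : KConnected 3 G) (Y₀ S₀ Z₀ : Set V)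
    (hsep : IsSeparation G Y₀ S₀ Z₀) (hY : Y₀.Nonempty) (hZ : Z₀.Nonempty)
    (hord : S₀.ncard = 3) (hnd : ¬ Degenerate G Y₀ S₀ Z₀)
    (hconn : (G.induce Z₀).Connected)
    (hsplit : ¬ ∃ z : V, SplitVertex G S₀ Z₀ z) :
    IsTangle G 4 {p : Set V × Set V × Set V |
      IsSeparation G p.1 p.2.1 p.2.2 ∧ p.2.1.ncard < 4 ∧
      (Z₀ ⊆ p.2.2 ∨ (p.1 ∩ S₀).ncard < (p.2.2 ∩ S₀).ncard)} := by
  have h : SplitFreeSep G Y₀ S₀ Z₀ := ⟨h3, hsep, hY, hZ, hord, hconn, hsplit⟩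
  refine ⟨fun p hp => ⟨hp.1, hp.2.1⟩, fun Y S Z hs hS => ?_, ?_, ?_⟩
  · rcases h.bigSide_or_bigSide hs (Nat.le_of_lt_succ hS) with hb | hb
    exacts [.inl ⟨hs, hS, hb⟩, .inr ⟨hs.symm, hS, hb⟩]
  · rintro ⟨Y₁, S₁, Z₁⟩ ⟨hs₁, hS₁, hb₁⟩ ⟨Y₂, S₂, Z₂⟩ ⟨hs₂, hS₂, hb₂⟩ ⟨Y₃, S₃, Z₃⟩ ⟨hs₃, hS₃, hb₃⟩
    exact .inr (h.edgeMeets hnd hs₁ (Nat.le_of_lt_succ hS₁) hb₁ hs₂ (Nat.le_of_lt_succ hS₂) hb₂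
      hs₃ (Nat.le_of_lt_succ hS₃) hb₃)
  · rintro ⟨Y, S, Z⟩ ⟨-, -, hZ₀ | hlt⟩
    exacts [hZ.mono hZ₀, (Set.nonempty_of_ncard_ne_zero (Nat.ne_zero_of_lt hlt)).mono
      Set.inter_subset_left]
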